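/- arXiv:2101.06401 — 2 statements merged into one kernel-verified Lean document; each statement's English description precedes it below -/
import Mathlib

section
/- Let n ≥ 3, m ≥ 2 be integers, α₀ = √((m−1)/(n−1)), β₁ = 1/(m(1+α₀²)+1) and β₂ = 2(n−1)/(m + (1+α₀²)^{−1}). If I ⊆ (0,∞) is an interval and z ∈ C¹(I) satisfies 1 + α₀² − α₀²·z(r) > 0 on I and the ODE (m + (1+α₀² − α₀²z)^{−1})·z'(r) = −2(n−1)·z(r)/r on I, then the function r ↦ (1 + α₀² − α₀²·z(r))^{−β₁} · z(r) · r^{β₂} is constant on I. -/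
open Set
noncomputable section

/-- `α₀ = √((m−1)/(n−1))`. -/
def alpha0 (n m : ℕ) : ℝ := Real.sqrt (((m : ℝ) - 1) / ((n : ℝ) - 1))

/-- `β₁ = 1/(m(1+α₀²)+1)`. -/
def beta1 (n m : ℕ) : ℝ := 1 / ((m : ℝ) * (1 + (alpha0 n m) ^ 2) + 1)

/-- `β₂ = 2(n−1)/(m + (1+α₀²)⁻¹)`. -/
def beta2 (n m : ℕ) : ℝ := 2 * ((n : ℝ) - 1) / ((m : ℝ) + (1 + (alpha0 n m) ^ 2)⁻¹)

/-! The weight `A = 1 + a − a z` turns the ODE into `(m + A⁻¹) z' = −c z / r`. Writing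
`β₁ = 1/(m(1+a)+1)` and `β₂ = c/(m + (1+a)⁻¹)`, the logarithmic derivative of
`A^{−β₁} z r^{β₂}` is `β₁ a z'/A + z'/z + β₂/r`, which vanishes identically along solutions
because `1 + a = A + a z`. A function with zero derivative on a convex set is constant. -/

theorem Convex.eqOn_of_hasDerivWithinAt_zero {s : Set ℝ} {f : ℝ → ℝ} (hs : Convex ℝ s)
    (hf : ∀ x ∈ s, HasDerivWithinAt f 0 s x) {x y : ℝ} (hx : x ∈ s) (hy : y ∈ s) :
    f x = f y := by
  have h := hs.norm_image_sub_le_of_norm_hasDerivWithin_le (C := 0) hf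
    (fun _ _ ↦ by rw [norm_zero]) hx hy
  rw [zero_mul, norm_le_zero_iff, sub_eq_zero] at h
  exact h.symm

theorem hasDerivWithinAt_rpow_mul_mul_rpow {s : Set ℝ} {z : ℝ → ℝ} {z' a b₁ b₂ r : ℝ}
    (hz : HasDerivWithinAt z z' s r) (hA : 0 < 1 + a - a * z r) (hr : 0 < r) :
    HasDerivWithinAt (fun x ↦ (1 + a - a * z x) ^ (-b₁) * z x * x ^ b₂)
      ((1 + a - a * z r) ^ (-b₁) * r ^ b₂
        * (b₁ * a * z r * z' / (1 + a - a * z r) + z' + b₂ * z r / r)) s r := by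
  have hAderiv : HasDerivWithinAt (fun x ↦ 1 + a - a * z x) (-(a * z')) s r := by
    simpa using (hz.const_mul a).const_sub (1 + a)
  refine (((hAderiv.rpow_const (p := -b₁) (Or.inl hA.ne')).fun_mul hz).fun_mul
    (Real.hasDerivAt_rpow_const (p := b₂) (Or.inl hr.ne')).hasDerivWithinAt).congr_deriv ?_
  rw [Real.rpow_sub hA, Real.rpow_sub hr, Real.rpow_one, Real.rpow_one]
  field_simp

theorem firstIntegral_logDeriv_eq_zero {a m c z z' r : ℝ} (hm : 0 ≤ m) (ha : 0 < 1 + a)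
    (hA : 0 < 1 + a - a * z) (hr : r ≠ 0) (hode : (m + (1 + a - a * z)⁻¹) * z' = -c * z / r) :
    1 / (m * (1 + a) + 1) * a * z * z' / (1 + a - a * z) + z'
      + c / (m + (1 + a)⁻¹) * z / r = 0 := by
  have hmA : m * (1 + a - a * z) + 1 ≠ 0 := by positivity
  have hD : m * (1 + a) + 1 ≠ 0 := by positivity
  field_simp at hode ⊢
  linear_combination (1 + a) * hode

theorem ode_first_integral_general
    (n m : ℕ)
    (I : Set ℝ) (hI : I ⊆ Ioi 0) (hIc : I.OrdConnected)
    (z z' : ℝ → ℝ)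
    (hz : ∀ r ∈ I, HasDerivWithinAt z (z' r) I r)
    (hposd : ∀ r ∈ I, 0 < 1 + (alpha0 n m) ^ 2 - (alpha0 n m) ^ 2 * z r)
    (hode : ∀ r ∈ I,
      ((m : ℝ) + (1 + (alpha0 n m) ^ 2 - (alpha0 n m) ^ 2 * z r)⁻¹) * z' r
        = -2 * ((n : ℝ) - 1) * z r / r) :
    ∀ r ∈ I, ∀ s ∈ I,
      (1 + (alpha0 n m) ^ 2 - (alpha0 n m) ^ 2 * z r) ^ (-(beta1 n m)) * z r * r ^ (beta2 n m)
        = (1 + (alpha0 n m) ^ 2 - (alpha0 n m) ^ 2 * z s) ^ (-(beta1 n m)) * z s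
            * s ^ (beta2 n m) := by
  intro r hr s hs
  refine hIc.convex.eqOn_of_hasDerivWithinAt_zero
    (f := fun x ↦ (1 + alpha0 n m ^ 2 - alpha0 n m ^ 2 * z x) ^ (-beta1 n m) * z x
      * x ^ beta2 n m) (fun x hx ↦ ?_) hr hs
  have hx0 : 0 < x := hI hx
  have hcancel := firstIntegral_logDeriv_eq_zero (m.cast_nonneg' (α := ℝ))
    (by positivity : 0 < 1 + alpha0 n m ^ 2) (hposd x hx) hx0.ne'
    (c := 2 * ((n : ℝ) - 1)) (by rw [hode x hx]; ring)
  exact (hasDerivWithinAt_rpow_mul_mul_rpow (hz x hx) (hposd x hx) hx0).congr_deriv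
    (by rw [beta1, beta2, hcancel, mul_zero])

/-- First integral of the ODE
`(m + (1+α₀²−α₀²z)⁻¹) z' = −2(n−1) z/r`: along any `C¹` solution `z` on an interval
`I ⊆ (0,∞)` with `1+α₀²−α₀²z > 0`, the quantity
`(1+α₀²−α₀²z)^{−β₁} · z · r^{β₂}` is constant. -/
theorem ode_first_integral
    (n m : ℕ) (hn : 3 ≤ n) (hm : 2 ≤ m)
    (I : Set ℝ) (hI : I ⊆ Ioi 0) (hIc : I.OrdConnected)
    (z z' : ℝ → ℝ)
    (hz : ∀ r ∈ I, HasDerivWithinAt z (z' r) I r)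
    (hz' : ContinuousOn z' I)
    (hposd : ∀ r ∈ I, 0 < 1 + (alpha0 n m) ^ 2 - (alpha0 n m) ^ 2 * z r)
    (hode : ∀ r ∈ I,
      ((m : ℝ) + (1 + (alpha0 n m) ^ 2 - (alpha0 n m) ^ 2 * z r)⁻¹) * z' r
        = -2 * ((n : ℝ) - 1) * z r / r) :
    ∀ r ∈ I, ∀ s ∈ I,
      (1 + (alpha0 n m) ^ 2 - (alpha0 n m) ^ 2 * z r) ^ (-(beta1 n m)) * z r * r ^ (beta2 n m)
        = (1 + (alpha0 n m) ^ 2 - (alpha0 n m) ^ 2 * z s) ^ (-(beta1 n m)) * z s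
            * s ^ (beta2 n m) :=
  ode_first_integral_general n m I hI hIc z z' hz hposd hode
end
end

section
/- Let α₀ > 0 and let φ ∈ C¹((0,∞)) satisfy φ(r) − r·φ'(r) > 0 and α₀·r < φ(r) < α₀·r + 1 for all r > 0, together with lim_{r↓0} φ(r) = 1. Then the map r ↦ φ(r)/r is strictly decreasing on (0,∞) and maps (0,∞) bijectively onto (α₀, ∞); in particular, for every s > α₀ there is exactly one r > 0 with φ(r) = s·r, i.e. the graph of φ meets every ray {(t, s·t) : t > 0} with s > α₀ in a single point (so the homothetic rescalings of the graph of φ foliate {(r,z) : z > α₀·r, r > 0}). -/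
open Set Filter
open scoped Topology

/-!
The derivative of `φ r / r` is `(r φ'(r) - φ(r)) / r²`, which is negative by the convexity
hypothesis, so `φ r / r` is strictly decreasing. It tends to `+∞` as `r ↓ 0` because `φ → 1`, and
to `α₀` as `r → ∞` because it is squeezed between `α₀` and `α₀ + 1 / r`. By the intermediate value
theorem it therefore takes every value above `α₀` exactly once.
-/

theorem strictAntiOn_div_self_of_mul_deriv_lt {φ : ℝ → ℝ}
    (hdiff : ∀ r : ℝ, 0 < r → DifferentiableAt ℝ φ r)
    (hderiv : ∀ r : ℝ, 0 < r → r * deriv φ r < φ r) :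
    StrictAntiOn (fun r => φ r / r) (Ioi 0) := by
  have hasDeriv : ∀ r : ℝ, 0 < r →
      HasDerivAt (fun r => φ r / r) ((deriv φ r * r - φ r * 1) / r ^ 2) r := fun r hr =>
    (hdiff r hr).hasDerivAt.div (hasDerivAt_id r) hr.ne'
  refine strictAntiOn_of_deriv_neg (convex_Ioi 0)
    (fun r hr => (hasDeriv r hr).continuousAt.continuousWithinAt) fun r hr => ?_
  rw [interior_Ioi] at hr
  rw [(hasDeriv r hr).deriv]
  have := hderiv r hr
  exact div_neg_of_neg_of_pos (by linarith) (pow_pos hr 2)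

theorem tendsto_div_self_nhdsGT_zero_atTop {φ : ℝ → ℝ} {c : ℝ} (hc : 0 < c)
    (hlim : Tendsto φ (𝓝[>] 0) (𝓝 c)) :
    Tendsto (fun r => φ r / r) (𝓝[>] 0) atTop := by
  simpa only [div_eq_mul_inv] using hlim.pos_mul_atTop hc tendsto_inv_nhdsGT_zero

theorem tendsto_div_self_atTop_of_bounds {φ : ℝ → ℝ} {α C : ℝ}
    (hbounds : ∀ r : ℝ, 0 < r → α * r < φ r ∧ φ r < α * r + C) :
    Tendsto (fun r => φ r / r) atTop (𝓝 α) := by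
  have hupper : Tendsto (fun r : ℝ => α + C * r⁻¹) atTop (𝓝 α) := by
    simpa using tendsto_const_nhds.add (tendsto_inv_atTop_zero.const_mul C)
  refine tendsto_of_tendsto_of_tendsto_of_le_of_le' tendsto_const_nhds hupper ?_ ?_ <;>
    filter_upwards [eventually_gt_atTop 0] with r hr
  · rw [le_div_iff₀ hr]
    exact (hbounds r hr).1.le
  · rw [div_le_iff₀ hr, add_mul, mul_assoc, inv_mul_cancel₀ hr.ne', mul_one]
    exact (hbounds r hr).2.le

theorem surjOn_Ioi_of_tendsto_atTop_of_tendsto {g : ℝ → ℝ} {b a : ℝ}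
    (hcont : ContinuousOn g (Ioi b)) (hleft : Tendsto g (𝓝[>] b) atTop)
    (hright : Tendsto g atTop (𝓝 a)) :
    SurjOn g (Ioi b) (Ioi a) := by
  intro s (hs : a < s)
  obtain ⟨x, hgx, hx⟩ := ((hleft.eventually_gt_atTop s).and self_mem_nhdsWithin).exists
  obtain ⟨y, hgy, hy⟩ :=
    ((hright.eventually (gt_mem_nhds hs)).and (eventually_gt_atTop b)).exists
  exact isPreconnected_Ioi.intermediate_value hy hx hcont ⟨hgy.le, hgx.le⟩

theorem graph_foliation_general
    (α₀ : ℝ) (φ : ℝ → ℝ)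
    (hdiff : ∀ r : ℝ, 0 < r → DifferentiableAt ℝ φ r)
    (hconvexity : ∀ r : ℝ, 0 < r → 0 < φ r - r * deriv φ r)
    (hbounds : ∀ r : ℝ, 0 < r → α₀ * r < φ r ∧ φ r < α₀ * r + 1)
    (hlim : Tendsto φ (𝓝[>] (0 : ℝ)) (𝓝 1)) :
    StrictAntiOn (fun r => φ r / r) (Ioi 0) ∧
    BijOn (fun r => φ r / r) (Ioi 0) (Ioi α₀) ∧
    ∀ s : ℝ, α₀ < s → ∃! r : ℝ, 0 < r ∧ φ r = s * r := by
  have hanti := strictAntiOn_div_self_of_mul_deriv_lt hdiff fun r hr => by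
    linarith [hconvexity r hr]
  have hcont : ContinuousOn (fun r => φ r / r) (Ioi 0) := fun r (hr : 0 < r) =>
    ((hdiff r hr).continuousAt.div continuousAt_id hr.ne').continuousWithinAt
  have hmaps : MapsTo (fun r => φ r / r) (Ioi 0) (Ioi α₀) := fun r (hr : 0 < r) =>
    (lt_div_iff₀ hr).2 (hbounds r hr).1
  have hsurj := surjOn_Ioi_of_tendsto_atTop_of_tendsto hcont
    (tendsto_div_self_nhdsGT_zero_atTop one_pos hlim) (tendsto_div_self_atTop_of_bounds hbounds)
  have hsolves : ∀ s r : ℝ, 0 < r → (φ r = s * r ↔ φ r / r = s) := fun s r hr =>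
    (div_eq_iff hr.ne').symm
  refine ⟨hanti, ⟨hmaps, hanti.injOn, hsurj⟩, fun s hs => ?_⟩
  obtain ⟨r, hr, hgr⟩ := hsurj hs
  refine ⟨r, ⟨hr, (hsolves s r hr).2 hgr⟩, fun r' ⟨hr', hφr'⟩ => ?_⟩
  exact hanti.injOn hr' hr (((hsolves s r' hr').1 hφr').trans hgr.symm)

/-- Foliation property: if `φ ∈ C¹((0,∞))` satisfies
`φ(r) − rφ'(r) > 0` and `α₀r < φ(r) < α₀r + 1` for all `r > 0`, and `φ(r) → 1` as
`r ↓ 0`, then `r ↦ φ(r)/r` is strictly decreasing on `(0,∞)` and maps `(0,∞)`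
bijectively onto `(α₀,∞)`; in particular for every `s > α₀` there is exactly one
`r > 0` with `φ(r) = s·r`. -/
theorem graph_foliation
    (α₀ : ℝ) (hα₀ : 0 < α₀) (φ : ℝ → ℝ)
    (hdiff : ∀ r : ℝ, 0 < r → DifferentiableAt ℝ φ r)
    (hC1 : ContinuousOn (deriv φ) (Ioi 0))
    (hconvexity : ∀ r : ℝ, 0 < r → 0 < φ r - r * deriv φ r)
    (hbounds : ∀ r : ℝ, 0 < r → α₀ * r < φ r ∧ φ r < α₀ * r + 1)
    (hlim : Tendsto φ (𝓝[>] (0 : ℝ)) (𝓝 1)) :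
    StrictAntiOn (fun r => φ r / r) (Ioi 0) ∧
    BijOn (fun r => φ r / r) (Ioi 0) (Ioi α₀) ∧
    ∀ s : ℝ, α₀ < s → ∃! r : ℝ, 0 < r ∧ φ r = s * r :=
  graph_foliation_general α₀ φ hdiff hconvexity hbounds hlim
end
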